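/- arXiv:2305.16541 — 8 statements merged into one kernel-verified Lean document; each statement's English description precedes it below -/
import Mathlib

section
/- Let B be a real symmetric n×n matrix and let B⁺ denote its positive semidefinite part. Then B⁺ is the unique optimal point of the semidefinite program: minimize Tr(A) over real symmetric n×n matrices A subject to A - B being positive semidefinite and A being positive semidefinite. That is: (i) B⁺ - B and B⁺ are positive semidefinite; (ii) for every symmetric A with A - B and A positive semidefinite, Tr(A) ≥ Tr(B⁺); and (iii) if moreover Tr(A) = Tr(B⁺), then A = B⁺. -/
open Matrix

lemma my_diag_nonneg {n : ℕ} {M : Matrix (Fin n) (Fin n) ℝ} (hM : M.PosSemidef) (i : Fin n) :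
    0 ≤ M i i := by simpa using hM.dotProduct_mulVec_nonneg (Pi.single i 1)

lemma my_row_zero {n : ℕ} {M : Matrix (Fin n) (Fin n) ℝ} (hM : M.PosSemidef) {i : Fin n}
    (h : M i i = 0) (j : Fin n) : M i j = 0 := by
  have hsym : M j i = M i j := by
    have ht := hM.1
    rw [Matrix.IsHermitian] at ht
    calc M j i = Mᴴ j i := by rw [ht]
    _ = M i j := by simp [Matrix.conjTranspose_apply]
  have key : ∀ t : ℝ, 0 ≤ 2 * t * M i j + t ^ 2 * M j j := by
    intro t
    have hq := hM.dotProduct_mulVec_nonneg (Pi.single i 1 + t • (Pi.single j 1 : Fin n → ℝ))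
    simp only [Matrix.mulVec_add, Matrix.mulVec_smul, Matrix.mulVec_single, dotProduct_add,
      add_dotProduct, smul_dotProduct, single_dotProduct, dotProduct_smul,
      smul_eq_mul, mul_one, one_mul, star_trivial, Pi.add_apply, Pi.smul_apply] at hq
    have hq2 : (0:ℝ) ≤ M i i + t * M j i + (t * M i j + t * (t * M j j)) := by
      simp only [Matrix.col_apply, MulOpposite.op_one, one_smul] at hq; linarith
    rw [h, hsym] at hq2
    nlinarith [hq2]
  have hjj : 0 ≤ M j j := my_diag_nonneg hM j
  have h1 : (0:ℝ) < M j j + 1 := by linarith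
  have h2 := key (-(M i j) / (M j j + 1))
  have h3 : 0 ≤ (2 * (-M i j / (M j j + 1)) * M i j + (-M i j / (M j j + 1)) ^ 2 * M j j)
      * (M j j + 1) ^ 2 := mul_nonneg h2 (by positivity)
  have h4 : (2 * (-M i j / (M j j + 1)) * M i j + (-M i j / (M j j + 1)) ^ 2 * M j j)
      * (M j j + 1) ^ 2 = -(M i j ^ 2 * (M j j + 2 )) := by
    field_simp
    ring
  rw [h4] at h3
  nlinarith [sq_nonneg (M i j)]

lemma my_conj_psd {n : ℕ} {X : Matrix (Fin n) (Fin n) ℝ} (hX : X.PosSemidef)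
    (P : Matrix (Fin n) (Fin n) ℝ) : (Pᵀ * X * P).PosSemidef := by
  have := hX.conjTranspose_mul_mul_same P
  rwa [Matrix.conjTranspose_eq_transpose_of_trivial] at this

/-- Let `B` be a real symmetric `n × n` matrix with spectral decomposition
`B = Oᵀ * diagonal lam * O` for an orthogonal matrix `O`, and let
`Bplus = Oᵀ * diagonal (max lam 0) * O` be its positive semidefinite part.  Then `Bplus` is the
unique optimal point of the SDP: minimize `Tr A` over symmetric `A` with `A - B ⪰ 0` and `A ⪰ 0`:
(i) `Bplus - B ⪰ 0` and `Bplus ⪰ 0`; (ii) every feasible `A` has `Tr A ≥ Tr Bplus`; and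
(iii) a feasible `A` with `Tr A = Tr Bplus` equals `Bplus`. -/
theorem psdPart_unique_optimum_trace_sdp {n : ℕ}
    (B O : Matrix (Fin n) (Fin n) ℝ) (lam : Fin n → ℝ)
    (hB : B.IsSymm) (hO : Oᵀ * O = 1) (hO' : O * Oᵀ = 1)
    (hdecomp : B = Oᵀ * Matrix.diagonal lam * O) :
    let Bplus := Oᵀ * Matrix.diagonal (fun i => max (lam i) 0) * O
    (Bplus - B).PosSemidef ∧ Bplus.PosSemidef ∧
      ∀ A : Matrix (Fin n) (Fin n) ℝ, A.IsSymm → (A - B).PosSemidef → A.PosSemidef →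
        Bplus.trace ≤ A.trace ∧ (A.trace = Bplus.trace → A = Bplus) := by
  intro Bplus
  set D := Matrix.diagonal lam with hD
  set Dp := Matrix.diagonal (fun i => max (lam i) 0) with hDp
  have hdiff : Bplus - B = Oᵀ * (Dp - D) * O := by
    rw [hdecomp]
    simp only [Matrix.mul_sub, Matrix.sub_mul]
    rfl
  have hsubdiag : Dp - D = Matrix.diagonal (fun i => max (lam i) 0 - lam i) := by
    rw [hDp, hD, Matrix.diagonal_sub]
  have h1 : (Bplus - B).PosSemidef := by
    rw [hdiff, hsubdiag]
    exact my_conj_psd (Matrix.PosSemidef.diagonal fun i => by simp [le_max_iff]) O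
  have h2 : Bplus.PosSemidef :=
    my_conj_psd (Matrix.PosSemidef.diagonal fun i => le_max_right _ _) O
  refine ⟨h1, h2, fun A hAs hAB hA0 => ?_⟩
  set M := O * A * Oᵀ with hM
  have hM0 : M.PosSemidef := by
    have := hA0.mul_mul_conjTranspose_same O
    rwa [Matrix.conjTranspose_eq_transpose_of_trivial] at this
  have hOBO : O * B * Oᵀ = D := by
    rw [hdecomp]
    simp only [← Matrix.mul_assoc]
    rw [hO', Matrix.one_mul, Matrix.mul_assoc, hO', Matrix.mul_one]
  have hMD : (M - D).PosSemidef := by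
    have e : M - D = O * (A - B) * Oᵀ := by
      rw [hM, ← hOBO]
      simp only [Matrix.mul_sub, Matrix.sub_mul]
    rw [e]
    have := hAB.mul_mul_conjTranspose_same O
    rwa [Matrix.conjTranspose_eq_transpose_of_trivial] at this
  have htrA : A.trace = M.trace := by
    rw [hM, Matrix.trace_mul_cycle, hO, Matrix.one_mul]
  have htrBp : Bplus.trace = ∑ i, max (lam i) 0 := by
    show (Oᵀ * Dp * O).trace = _
    rw [Matrix.trace_mul_cycle, hO', Matrix.one_mul, hDp,
      Matrix.trace_diagonal]
  have hpt : ∀ i, max (lam i) 0 ≤ M i i := by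
    intro i
    refine max_le ?_ (my_diag_nonneg hM0 i)
    have := my_diag_nonneg hMD i
    simp only [Matrix.sub_apply, hD, Matrix.diagonal_apply_eq] at this
    linarith
  have htrM : M.trace = ∑ i, M i i := by rw [Matrix.trace]; rfl
  have hle : Bplus.trace ≤ A.trace := by
    rw [htrA, htrM, htrBp]
    exact Finset.sum_le_sum fun i _ => hpt i
  refine ⟨hle, fun heq => ?_⟩
  have hdiag : ∀ i, M i i = max (lam i) 0 := by
    have hsum : ∑ i, M i i = ∑ i, max (lam i) 0 := by
      rw [← htrM, ← htrA, heq, htrBp]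
    have := (Finset.sum_eq_sum_iff_of_le (fun i _ => hpt i)).mp hsum.symm
    intro i
    exact (this i (Finset.mem_univ i)).symm
  have hMDp : M = Dp := by
    ext i j
    rcases le_or_gt (lam i) 0 with hli | hli
    · have hMi : M i i = 0 := by rw [hdiag i, max_eq_right hli]
      rw [my_row_zero hM0 hMi j, hDp]
      rcases eq_or_ne i j with rfl | hij
      · simp [max_eq_right hli]
      · simp [Matrix.diagonal_apply_ne _ hij]
    · have hMi : (M - D) i i = 0 := by
        simp only [Matrix.sub_apply, hD, Matrix.diagonal_apply_eq]
        rw [hdiag i, max_eq_left hli.le, sub_self]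
      have := my_row_zero hMD hMi j
      simp only [Matrix.sub_apply, sub_eq_zero] at this
      rw [this, hD, hDp]
      rcases eq_or_ne i j with rfl | hij
      · simp [max_eq_left hli.le]
      · simp [Matrix.diagonal_apply_ne _ hij]
  have : A = Oᵀ * M * O := by
    rw [hM]
    simp only [← Matrix.mul_assoc]
    rw [hO, Matrix.one_mul, Matrix.mul_assoc, hO, Matrix.mul_one]
  rw [this, hMDp]
end

section
/- Let B be a real symmetric n×n matrix with eigenvalues λ₁,…,λₙ (with multiplicity). Then the minimum of Tr(A) over all real symmetric n×n matrices A such that A - B is positive semidefinite and A is positive semidefinite equals Σᵢ max(λᵢ, 0), i.e., the sum of the positive eigenvalues of B. -/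
open Matrix

private lemma conj_psd {n : ℕ} {A : Matrix (Fin n) (Fin n) ℝ} (hA : A.PosSemidef)
    (M : Matrix (Fin n) (Fin n) ℝ) : (M * A * Mᵀ).PosSemidef := by
  simpa using hA.mul_mul_conjTranspose_same M

private lemma diag_nn {n : ℕ} {A : Matrix (Fin n) (Fin n) ℝ} (hA : A.PosSemidef)
    (i : Fin n) : 0 ≤ A i i := by
  exact hA.diag_nonneg

/-- Let `B` be a real symmetric `n × n` matrix with eigenvalues
`lam 1, …, lam n` (with multiplicity), exhibited by a spectral decomposition
`B = Oᵀ * diagonal lam * O` with `O` orthogonal.  Then the minimum of `Tr A` over all real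
symmetric matrices `A` with `A - B` positive semidefinite and `A` positive semidefinite equals
`∑ i, max (lam i) 0`, the sum of the positive eigenvalues of `B`. -/
theorem min_trace_eq_sum_pos_eigenvalues {n : ℕ}
    (B O : Matrix (Fin n) (Fin n) ℝ) (lam : Fin n → ℝ)
    (hO : Oᵀ * O = 1) (hO' : O * Oᵀ = 1)
    (hdecomp : B = Oᵀ * Matrix.diagonal lam * O) :
    IsLeast {t : ℝ | ∃ A : Matrix (Fin n) (Fin n) ℝ,
        A.IsSymm ∧ (A - B).PosSemidef ∧ A.PosSemidef ∧ t = A.trace}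
      (∑ i, max (lam i) 0) := by
  constructor
  · -- membership: A = Oᵀ * diagonal (max lam 0) * O
    refine ⟨Oᵀ * Matrix.diagonal (fun i => max (lam i) 0) * O, ?_, ?_, ?_, ?_⟩
    · simp [Matrix.IsSymm, Matrix.transpose_mul, Matrix.diagonal_transpose, mul_assoc]
    · have : Oᵀ * Matrix.diagonal (fun i => max (lam i) 0) * O - B
          = Oᵀ * (Matrix.diagonal (fun i => max (lam i) 0) - Matrix.diagonal lam) * O := by
        rw [hdecomp]; noncomm_ring
      rw [this]
      have hd : (Matrix.diagonal (fun i => max (lam i) 0 - lam i)).PosSemidef :=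
        Matrix.posSemidef_diagonal_iff.mpr fun i => by simp [le_max_left]
      simpa [Matrix.diagonal_sub, Matrix.transpose_transpose] using conj_psd hd Oᵀ
    · have hd : (Matrix.diagonal (fun i => max (lam i) 0)).PosSemidef :=
        Matrix.posSemidef_diagonal_iff.mpr fun i => le_max_right _ _
      simpa [Matrix.transpose_transpose] using conj_psd hd Oᵀ
    · rw [Matrix.trace_mul_comm, ← mul_assoc, hO', one_mul, Matrix.trace_diagonal]
  · rintro t ⟨A, hAs, hAB, hA, rfl⟩
    set C := O * A * Oᵀ with hC
    have hCpsd : C.PosSemidef := conj_psd hA O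
    have hCB : (C - Matrix.diagonal lam).PosSemidef := by
      have hOB : O * B * Oᵀ = Matrix.diagonal lam := by
        calc O * B * Oᵀ = (O * Oᵀ) * Matrix.diagonal lam * (O * Oᵀ) := by
              rw [hdecomp]; noncomm_ring
          _ = Matrix.diagonal lam := by rw [hO']; simp
      have h1 : C - Matrix.diagonal lam = O * (A - B) * Oᵀ := by
        rw [hC, ← hOB, ← Matrix.sub_mul, ← Matrix.mul_sub]
      rw [h1]; exact conj_psd hAB O
    have htr : A.trace = C.trace := by
      rw [hC, Matrix.trace_mul_comm, ← mul_assoc, hO, one_mul]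
    rw [htr, Matrix.trace]
    apply Finset.sum_le_sum
    intro i _
    have h1 : 0 ≤ C i i := diag_nn hCpsd i
    have h2 : lam i ≤ C i i := by
      have := diag_nn hCB i
      simp only [Matrix.sub_apply, Matrix.diagonal_apply_eq] at this
      linarith
    simp only [Matrix.diag_apply, sup_le_iff]
    exact ⟨h2, h1⟩
end

section
/- Explicit solution of the single-sensitive-input privacy-aware semidefinite program: let M be a real positive semidefinite n×n matrix, v ∈ ℝⁿ, and a > 0 a real number. Then the matrix Σ_opt = (a⁻¹ v vᵀ - M)⁺ is the unique optimal point of the problem: minimize Tr(Σ) over real symmetric n×n matrices Σ subject to Σ + M - a⁻¹ v vᵀ being positive semidefinite and Σ being positive semidefinite. (In the paper's notation M = K_{X,X} + V, v = K_{X,s}, and a = K_{s,s} - ξ with privacy tolerance ξ < K_{s,s}.) -/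
open Matrix

section aux
variable {n : ℕ} {A : Matrix (Fin n) (Fin n) ℝ}

lemma psd_diag_nonneg (hA : A.PosSemidef) (i : Fin n) : 0 ≤ A i i := by
  have := hA.dotProduct_mulVec_nonneg (Pi.single i 1)
  simpa [mulVec_single_one, single_dotProduct] using this

lemma psd_row_zero (hA : A.PosSemidef) (i : Fin n) (h : A i i = 0) (j : Fin n) :
    A i j = 0 := by
  have h0 : star (Pi.single i 1 : Fin n → ℝ) ⬝ᵥ A *ᵥ (Pi.single i 1) = 0 := by
    simpa [mulVec_single_one, single_dotProduct] using h
  have hz := (hA.dotProduct_mulVec_zero_iff (Pi.single i 1)).mp h0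
  have hji : A j i = 0 := by
    have := congrFun hz j
    simpa [mulVec_single_one] using this
  have := hA.1.apply i j
  simp only [RCLike.star_def, starRingEnd_apply, star_trivial] at this
  rw [← this, hji]
end aux


/-- Explicit solution of the single-sensitive-input privacy-aware SDP: let `M`
be a real PSD `n × n` matrix, `v ∈ ℝⁿ`, and `a > 0`.  Let
`Sopt = (a⁻¹ • v vᵀ - M)⁺ = Oᵀ * diagonal (max lam 0) * O`, where
`a⁻¹ • v vᵀ - M = Oᵀ * diagonal lam * O` is any spectral decomposition with `O` orthogonal.
Then `Sopt` is the unique optimal point of: minimize `Tr Σ` over symmetric `Σ` subject to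
`Σ + M - a⁻¹ • v vᵀ ⪰ 0` and `Σ ⪰ 0`. -/
theorem single_sensitive_input_sdp_solution {n : ℕ}
    (M : Matrix (Fin n) (Fin n) ℝ) (v : Fin n → ℝ) (a : ℝ)
    (hM : M.PosSemidef) (ha : 0 < a)
    (O : Matrix (Fin n) (Fin n) ℝ) (lam : Fin n → ℝ)
    (hO : Oᵀ * O = 1) (hO' : O * Oᵀ = 1)
    (hdecomp : a⁻¹ • Matrix.vecMulVec v v - M = Oᵀ * Matrix.diagonal lam * O) :
    let Sopt := Oᵀ * Matrix.diagonal (fun i => max (lam i) 0) * O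
    (Sopt + M - a⁻¹ • Matrix.vecMulVec v v).PosSemidef ∧ Sopt.PosSemidef ∧
      ∀ S : Matrix (Fin n) (Fin n) ℝ, S.IsSymm →
        (S + M - a⁻¹ • Matrix.vecMulVec v v).PosSemidef → S.PosSemidef →
        Sopt.trace ≤ S.trace ∧ (S.trace = Sopt.trace → S = Sopt) := by
  
  intro Sopt
  have hOH : (Oᵀ)ᴴ = O := by
    have : (Oᵀ)ᴴ = (Oᵀ)ᵀ := conjTranspose_eq_transpose_of_trivial _
    rw [this, transpose_transpose]
  have hOH' : Oᴴ = Oᵀ := conjTranspose_eq_transpose_of_trivial _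
  -- conjugation preserves PSD
  have hconj : ∀ B : Matrix (Fin n) (Fin n) ℝ, B.PosSemidef → (Oᵀ * B * O).PosSemidef := by
    intro B hB
    have := hB.mul_mul_conjTranspose_same Oᵀ
    rwa [hOH] at this
  have hconj' : ∀ B : Matrix (Fin n) (Fin n) ℝ, B.PosSemidef → (O * B * Oᵀ).PosSemidef := by
    intro B hB
    have := hB.mul_mul_conjTranspose_same O
    rwa [hOH'] at this
  have tr_conj : ∀ B : Matrix (Fin n) (Fin n) ℝ, (Oᵀ * B * O).trace = B.trace := by
    intro B
    rw [trace_mul_comm, ← mul_assoc, hO', one_mul]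
  -- rewrite the feasibility constraint
  have hfeq : ∀ S : Matrix (Fin n) (Fin n) ℝ,
      S + M - a⁻¹ • Matrix.vecMulVec v v = S - Oᵀ * Matrix.diagonal lam * O := by
    intro S
    rw [← hdecomp]; abel
  refine ⟨?_, ?_, ?_⟩
  · rw [hfeq]
    have : Sopt - Oᵀ * Matrix.diagonal lam * O
        = Oᵀ * (Matrix.diagonal (fun i => max (lam i) 0) - Matrix.diagonal lam) * O := by
      rw [mul_sub, sub_mul]
    rw [this, diagonal_sub]
    exact hconj _ (PosSemidef.diagonal fun i => by
      simp [sub_nonneg, le_max_left])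
  · exact hconj _ (PosSemidef.diagonal fun i => by simp [le_max_right])
  · intro S hSsym hfeas hSpsd
    set T := O * S * Oᵀ with hT
    have hTpsd : T.PosSemidef := hconj' S hSpsd
    have hS' : S = Oᵀ * T * O := by
      rw [hT]
      calc S = (Oᵀ * O) * S * (Oᵀ * O) := by rw [hO]; simp
        _ = Oᵀ * (O * S * Oᵀ) * O := by noncomm_ring
    have hfeas' : (T - Matrix.diagonal lam).PosSemidef := by
      rw [hfeq] at hfeas
      have : T - Matrix.diagonal lam = O * (S - Oᵀ * Matrix.diagonal lam * O) * Oᵀ := by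
        rw [hT, mul_sub, sub_mul]
        congr 1
        symm
        calc O * (Oᵀ * Matrix.diagonal lam * O) * Oᵀ
            = (O * Oᵀ) * Matrix.diagonal lam * (O * Oᵀ) := by noncomm_ring
          _ = Matrix.diagonal lam := by rw [hO']; simp
      rw [this]
      exact hconj' _ hfeas
    have hdiag : ∀ i, max (lam i) 0 ≤ T i i := by
      intro i
      have h1 := psd_diag_nonneg hfeas' i
      have h2 := psd_diag_nonneg hTpsd i
      simp only [Matrix.sub_apply, diagonal_apply_eq, sub_nonneg] at h1
      exact max_le h1 h2
    have htrS : S.trace = T.trace := by rw [hS', tr_conj]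
    have htrSopt : Sopt.trace = ∑ i, max (lam i) 0 := by
      rw [tr_conj, trace_diagonal]
    have htrT : T.trace = ∑ i, T i i := rfl
    constructor
    · rw [htrS, htrSopt, htrT]
      exact Finset.sum_le_sum fun i _ => hdiag i
    · intro heq
      have hsum : ∑ i, T i i = ∑ i, max (lam i) 0 := by
        rw [← htrT, ← htrS, heq, htrSopt]
      have hTii : ∀ i, T i i = max (lam i) 0 := by
        have h0 : ∑ i, (T i i - max (lam i) 0) = 0 := by
          rw [Finset.sum_sub_distrib, hsum, sub_self]
        intro i
        have := (Finset.sum_eq_zero_iff_of_nonneg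
          (fun j _ => sub_nonneg.mpr (hdiag j))).mp h0 i (Finset.mem_univ i)
        linarith [hdiag i]
      have hTeq : T = Matrix.diagonal (fun i => max (lam i) 0) := by
        ext i j
        by_cases hij : i = j
        · subst hij; simp [hTii i]
        · rw [diagonal_apply_ne _ hij]
          by_cases hl : lam i ≤ 0
          · have hzero : T i i = 0 := by rw [hTii i, max_eq_right hl]
            exact psd_row_zero hTpsd i hzero j
          · push_neg at hl
            have hzero : (T - Matrix.diagonal lam) i i = 0 := by
              simp [hTii i, max_eq_left hl.le]
            have := psd_row_zero hfeas' i hzero j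
            simpa [diagonal_apply_ne _ hij] using this
      rw [hS', hTeq]
end

section
/- Explicit strongly privacy-aware solution: let M be a real positive semidefinite n×n matrix, B a real γ×n matrix, and D a real positive definite γ×γ matrix. Then Σ_opt = (Bᵀ D⁻¹ B - M)⁺ is the unique optimal point of the problem: minimize Tr(Σ) over real symmetric n×n matrices Σ subject to Σ + M - Bᵀ D⁻¹ B being positive semidefinite and Σ being positive semidefinite. (In the paper's notation M = K_{X,X} + V, B = K_{S,X}, and D = K_{S,S} - Ξ where Ξ is the prescribed positive semidefinite privacy matrix with K_{S,S} - Ξ positive definite.) -/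
open Matrix

lemma psd_diag_nonneg_s4 {n : ℕ} {T : Matrix (Fin n) (Fin n) ℝ} (hT : T.PosSemidef)
    (i : Fin n) : 0 ≤ T i i := by
  obtain ⟨C, rfl⟩ := (by open scoped MatrixOrder in simpa only [star_eq_conjTranspose] using CStarAlgebra.nonneg_iff_eq_star_mul_self.mp hT.nonneg : ∃ C : Matrix (Fin n) (Fin n) ℝ, T = Cᴴ * C)
  simp only [mul_apply, conjTranspose_apply, star_trivial]
  exact Finset.sum_nonneg fun k _ => mul_self_nonneg _

lemma psd_row_eq_zero {n : ℕ} {T : Matrix (Fin n) (Fin n) ℝ} (hT : T.PosSemidef)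
    (i : Fin n) (h : T i i = 0) (j : Fin n) : T i j = 0 := by
  obtain ⟨C, hC⟩ := (by open scoped MatrixOrder in simpa only [star_eq_conjTranspose] using CStarAlgebra.nonneg_iff_eq_star_mul_self.mp hT.nonneg : ∃ C : Matrix (Fin n) (Fin n) ℝ, T = Cᴴ * C)
  have hcol : ∀ k, C k i = 0 := by
    have h0 : ∑ k, C k i * C k i = 0 := by
      have := h
      rw [hC] at this
      simpa [mul_apply, conjTranspose_apply] using this
    intro k
    have := (Finset.sum_eq_zero_iff_of_nonneg (fun k _ => mul_self_nonneg (C k i))).mp h0 k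
      (Finset.mem_univ k)
    exact mul_self_eq_zero.mp this
  rw [hC]
  simp [mul_apply, conjTranspose_apply, hcol]

lemma psd_conj {n : ℕ} {T : Matrix (Fin n) (Fin n) ℝ} (hT : T.PosSemidef)
    (P : Matrix (Fin n) (Fin n) ℝ) : (P * T * Pᵀ).PosSemidef := by
  rw [← conjTranspose_eq_transpose_of_trivial]
  exact hT.mul_mul_conjTranspose_same P

/-- Explicit strongly privacy-aware solution: let `M` be a real PSD `n × n`
matrix, `B` a real `γ × n` matrix, and `D` a real positive definite `γ × γ` matrix.  Let
`Sopt = (Bᵀ D⁻¹ B - M)⁺ = Oᵀ * diagonal (max lam 0) * O`, where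
`Bᵀ D⁻¹ B - M = Oᵀ * diagonal lam * O` is any spectral decomposition with `O` orthogonal.
Then `Sopt` is the unique optimal point of: minimize `Tr Σ` over symmetric `Σ` subject to
`Σ + M - Bᵀ D⁻¹ B ⪰ 0` and `Σ ⪰ 0`. -/
theorem strongly_privacy_aware_sdp_solution {n γ : ℕ}
    (M : Matrix (Fin n) (Fin n) ℝ) (B : Matrix (Fin γ) (Fin n) ℝ)
    (D : Matrix (Fin γ) (Fin γ) ℝ)
    (hM : M.PosSemidef) (hD : D.PosDef)
    (O : Matrix (Fin n) (Fin n) ℝ) (lam : Fin n → ℝ)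
    (hO : Oᵀ * O = 1) (hO' : O * Oᵀ = 1)
    (hdecomp : Bᵀ * D⁻¹ * B - M = Oᵀ * Matrix.diagonal lam * O) :
    let Sopt := Oᵀ * Matrix.diagonal (fun i => max (lam i) 0) * O
    (Sopt + M - Bᵀ * D⁻¹ * B).PosSemidef ∧ Sopt.PosSemidef ∧
      ∀ S : Matrix (Fin n) (Fin n) ℝ, S.IsSymm →
        (S + M - Bᵀ * D⁻¹ * B).PosSemidef → S.PosSemidef →
        Sopt.trace ≤ S.trace ∧ (S.trace = Sopt.trace → S = Sopt) := by
  intro Sopt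
  set X := Bᵀ * D⁻¹ * B with hXdef
  -- key algebraic identity
  have key : ∀ S : Matrix (Fin n) (Fin n) ℝ,
      S + M - X = Oᵀ * (O * S * Oᵀ - Matrix.diagonal lam) * O := by
    intro S
    have h1 : S + M - X = S - (X - M) := by abel
    rw [h1, hdecomp, Matrix.mul_sub, Matrix.sub_mul]
    congr 1
    calc S = 1 * S * 1 := by simp
      _ = Oᵀ * (O * S * Oᵀ) * O := by
          rw [← hO]; noncomm_ring
  have hSopt_diag : ∀ S : Matrix (Fin n) (Fin n) ℝ,
      O * (Oᵀ * S * O) * Oᵀ = S := by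
    intro S
    calc O * (Oᵀ * S * O) * Oᵀ = (O * Oᵀ) * S * (O * Oᵀ) := by noncomm_ring
      _ = S := by rw [hO']; simp
  have hfeas1 : (Sopt + M - X).PosSemidef := by
    rw [key]
    have : O * Sopt * Oᵀ - Matrix.diagonal lam
        = Matrix.diagonal (fun i => max (lam i) 0 - lam i) := by
      rw [show O * Sopt * Oᵀ = Matrix.diagonal (fun i => max (lam i) 0) from
        hSopt_diag _, ← diagonal_sub]
    rw [this]
    have : (Oᵀ * Matrix.diagonal (fun i => max (lam i) 0 - lam i) * O).PosSemidef := by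
      have hd : (Matrix.diagonal (fun i => max (lam i) 0 - lam i)).PosSemidef :=
        PosSemidef.diagonal fun i => by simp [le_max_left, le_max_right]
      simpa using psd_conj hd Oᵀ
    simpa using this
  have hfeas2 : Sopt.PosSemidef := by
    have hd : (Matrix.diagonal (fun i => max (lam i) 0)).PosSemidef :=
      PosSemidef.diagonal fun i => le_max_right _ _
    simpa using psd_conj hd Oᵀ
  refine ⟨hfeas1, hfeas2, ?_⟩
  intro S hSsymm hS1 hS2
  set T := O * S * Oᵀ with hTdef
  have hT2 : (T - Matrix.diagonal lam).PosSemidef := by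
    have := hS1
    rw [key S] at this
    have h := psd_conj this O
    have : O * (Oᵀ * (T - Matrix.diagonal lam) * O) * Oᵀ = T - Matrix.diagonal lam :=
      hSopt_diag _
    rwa [show O * (Oᵀ * (O * S * Oᵀ - Matrix.diagonal lam) * O) * Oᵀ
        = T - Matrix.diagonal lam from hSopt_diag _] at h
  have hT1 : T.PosSemidef := psd_conj hS2 O
  have hdiagT : ∀ i, max (lam i) 0 ≤ T i i := by
    intro i
    have h1 : 0 ≤ T i i := psd_diag_nonneg_s4 hT1 i
    have h2 : 0 ≤ (T - Matrix.diagonal lam) i i := psd_diag_nonneg_s4 hT2 i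
    simp only [Matrix.sub_apply, diagonal_apply_eq] at h2
    exact max_le (by linarith) h1
  have htrT : S.trace = T.trace := by
    rw [hTdef, Matrix.trace_mul_cycle, hO, Matrix.one_mul]
  have htrSopt : Sopt.trace = ∑ i, max (lam i) 0 := by
    rw [show Sopt.trace = (Oᵀ * Matrix.diagonal (fun i => max (lam i) 0) * O).trace from rfl,
      Matrix.trace_mul_cycle, hO', Matrix.one_mul, trace_diagonal]
  have htrTsum : T.trace = ∑ i, T i i := by rw [Matrix.trace]; rfl
  have hle : Sopt.trace ≤ S.trace := by
    rw [htrT, htrTsum, htrSopt]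
    exact Finset.sum_le_sum fun i _ => hdiagT i
  refine ⟨hle, fun heq => ?_⟩
  -- equality case
  have hsum0 : ∑ i, (T i i - max (lam i) 0) = 0 := by
    rw [Finset.sum_sub_distrib, ← htrTsum, ← htrT, heq, htrSopt, sub_self]
  have hdiag_eq : ∀ i, T i i = max (lam i) 0 := by
    intro i
    have := (Finset.sum_eq_zero_iff_of_nonneg
      (fun i _ => sub_nonneg.mpr (hdiagT i))).mp hsum0 i (Finset.mem_univ i)
    linarith
  have hTeq : T = Matrix.diagonal (fun i => max (lam i) 0) := by
    ext i j
    rcases eq_or_ne i j with rfl | hij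
    · simp [hdiag_eq i]
    · rw [diagonal_apply_ne _ hij]
      rcases le_or_gt (lam i) 0 with hli | hli
      · exact psd_row_eq_zero hT1 i (by rw [hdiag_eq i]; simp [hli]) j
      · have h0 : (T - Matrix.diagonal lam) i i = 0 := by
          simp [hdiag_eq i, le_of_lt hli]
        have := psd_row_eq_zero hT2 i h0 j
        simp only [Matrix.sub_apply, diagonal_apply_ne _ hij, sub_zero] at this
        exact this
  have : Oᵀ * T * O = S := by
    rw [hTdef]
    calc Oᵀ * (O * S * Oᵀ) * O = (Oᵀ * O) * S * (Oᵀ * O) := by noncomm_ring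
      _ = S := by rw [hO]; simp
  rw [← this, hTeq]
end

section
/- Weak versus strong privacy-aware solutions (Theorem 2, part 1): let M be a real positive semidefinite n×n matrix, C₀ a real positive definite γ×γ matrix, B a real γ×n matrix with rows b₁ᵀ,…,b_γᵀ (so bᵢ ∈ ℝⁿ), and Ξ a real positive semidefinite γ×γ matrix such that C₀ - Ξ is positive definite; set ξᵢ = Ξᵢᵢ, and note (C₀)ᵢᵢ - ξᵢ > 0 for each i. Define the weak feasible set 𝒲 = {Σ symmetric PSD : Σ + M - ((C₀)ᵢᵢ - ξᵢ)⁻¹ bᵢ bᵢᵀ ⪰ 0 for all i = 1,…,γ} and the strong feasible set 𝒮 = {Σ symmetric PSD : Σ + M - Bᵀ (C₀ - Ξ)⁻¹ B ⪰ 0}. Then 𝒮 ⊆ 𝒲; consequently, if Σ_weak minimizes the trace over 𝒲 and Σ_strong minimizes the trace over 𝒮, then Tr(Σ_weak) ≤ Tr(Σ_strong). -/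
open Matrix

lemma key_ineq {γ : ℕ} {D : Matrix (Fin γ) (Fin γ) ℝ} (hD : D.PosDef) (v : Fin γ → ℝ) (i : Fin γ) :
    (D i i)⁻¹ * (v i * v i) ≤ v ⬝ᵥ (D⁻¹ *ᵥ v) := by
  have hdet : IsUnit D.det := isUnit_iff_ne_zero.mpr hD.det_pos.ne'
  have hii : 0 < D i i := by
    have h := hD.dotProduct_mulVec_pos (x := Pi.single i 1) (by
      intro h; have := congrFun h i; simp at this)
    simpa using h
  set e : Fin γ → ℝ := Pi.single i 1 with he
  set t : ℝ := v i / D i i with ht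
  set w : Fin γ → ℝ := v - t • (D *ᵥ e) with hw
  have h0 : 0 ≤ w ⬝ᵥ (D⁻¹ *ᵥ w) := by simpa using hD.inv.posSemidef.dotProduct_mulVec_nonneg w
  have hDe : D⁻¹ *ᵥ (D *ᵥ e) = e := by
    rw [mulVec_mulVec, nonsing_inv_mul D hdet, one_mulVec]
  have hDeD : D *ᵥ e = e ᵥ* D := by
    conv_lhs => rw [← hD.1.eq]
    simp [conjTranspose_eq_transpose_of_trivial, mulVec_transpose]
  have h2 : v ⬝ᵥ e = v i := by simp [he]
  have h3 : (D *ᵥ e) ⬝ᵥ (D⁻¹ *ᵥ v) = v i := by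
    rw [dotProduct_mulVec, hDeD, vecMul_vecMul, mul_nonsing_inv D hdet, vecMul_one]
    simp [he]
  have h4 : (D *ᵥ e) ⬝ᵥ e = D i i := by
    rw [hDeD]; simp [he, vecMul, dotProduct, Pi.single_apply, ite_mul, mul_ite]
  have hexp : w ⬝ᵥ (D⁻¹ *ᵥ w) =
      v ⬝ᵥ (D⁻¹ *ᵥ v) - t * v i - t * v i + t * (t * D i i) := by
    have h1 : D⁻¹ *ᵥ w = D⁻¹ *ᵥ v - t • e := by
      rw [hw, mulVec_sub, mulVec_smul, hDe]
    rw [h1, hw]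
    simp only [sub_dotProduct, dotProduct_sub, smul_dotProduct, dotProduct_smul,
      smul_eq_mul, h2, h3, h4]
    ring
  rw [hexp] at h0
  have hne : D i i ≠ 0 := hii.ne'
  have h5 : t * (t * D i i) = (D i i)⁻¹ * (v i * v i) := by
    rw [ht]; field_simp
  have h6 : t * v i = (D i i)⁻¹ * (v i * v i) := by
    rw [ht]; field_simp
  rw [h5, h6] at h0
  linarith

/-- Theorem 2, part 1.  With `M ⪰ 0`, `C₀ ≻ 0`, `Ξ ⪰ 0`, `C₀ - Ξ ≻ 0` and
privacy tolerances `ξ i = Ξ i i`, the strong feasible set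
`𝒮 = {Σ ⪰ 0 : Σ + M - Bᵀ (C₀ - Ξ)⁻¹ B ⪰ 0}` is contained in the weak feasible set
`𝒲 = {Σ ⪰ 0 : Σ + M - ((C₀)ᵢᵢ - ξᵢ)⁻¹ bᵢ bᵢᵀ ⪰ 0 for all i}` (where `bᵢ` is the `i`-th row of
`B`); consequently, trace minimizers satisfy `Tr Σ_weak ≤ Tr Σ_strong`. -/
theorem strong_subset_weak_and_trace_le {n γ : ℕ}
    (M : Matrix (Fin n) (Fin n) ℝ) (C₀ Ξ : Matrix (Fin γ) (Fin γ) ℝ)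
    (B : Matrix (Fin γ) (Fin n) ℝ)
    (hM : M.PosSemidef) (hC₀ : C₀.PosDef) (hΞ : Ξ.PosSemidef) (hC₀Ξ : (C₀ - Ξ).PosDef) :
    let 𝒲 : Set (Matrix (Fin n) (Fin n) ℝ) :=
      {S | S.PosSemidef ∧ ∀ i : Fin γ,
        (S + M - (C₀ i i - Ξ i i)⁻¹ • Matrix.vecMulVec (B i) (B i)).PosSemidef}
    let 𝒮 : Set (Matrix (Fin n) (Fin n) ℝ) :=
      {S | S.PosSemidef ∧ (S + M - Bᵀ * (C₀ - Ξ)⁻¹ * B).PosSemidef}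
    𝒮 ⊆ 𝒲 ∧
      ∀ Sweak ∈ 𝒲, ∀ Sstrong ∈ 𝒮,
        (∀ A ∈ 𝒲, Sweak.trace ≤ A.trace) → (∀ A ∈ 𝒮, Sstrong.trace ≤ A.trace) →
        Sweak.trace ≤ Sstrong.trace := by
  intro 𝒲 𝒮
  set D := C₀ - Ξ with hDdef
  have hsub : 𝒮 ⊆ 𝒲 := by
    rintro S ⟨hS, hS2⟩
    refine ⟨hS, fun i => ?_⟩
    have hDii : C₀ i i - Ξ i i = D i i := by simp [hDdef, Matrix.sub_apply]
    have hT : (Bᵀ * D⁻¹ * B - (D i i)⁻¹ • vecMulVec (B i) (B i)).PosSemidef := by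
      refine posSemidef_iff_dotProduct_mulVec.mpr ⟨?_, ?_⟩
      · apply IsHermitian.sub
        · have h := isHermitian_conjTranspose_mul_mul B hC₀Ξ.inv.1
          simpa [conjTranspose_eq_transpose_of_trivial] using h
        · have hvv : (vecMulVec (B i) (B i)).IsHermitian := by
            ext a b
            simp [conjTranspose_apply, vecMulVec_apply, mul_comm]
          unfold Matrix.IsHermitian
          rw [conjTranspose_smul, hvv.eq, star_trivial]
      · intro x
        have hstar : star x = x := by simp
        rw [hstar, sub_mulVec, dotProduct_sub]
        have hq1 : x ⬝ᵥ ((Bᵀ * D⁻¹ * B) *ᵥ x) = (B *ᵥ x) ⬝ᵥ (D⁻¹ *ᵥ (B *ᵥ x)) := by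
          rw [← mulVec_mulVec, ← mulVec_mulVec, dotProduct_mulVec x Bᵀ, vecMul_transpose]
        have hq2 : x ⬝ᵥ (((D i i)⁻¹ • vecMulVec (B i) (B i)) *ᵥ x)
            = (D i i)⁻¹ * (((B i) ⬝ᵥ x) * ((B i) ⬝ᵥ x)) := by
          rw [smul_mulVec, dotProduct_smul, smul_eq_mul]
          congr 1
          simp only [dotProduct, mulVec, vecMulVec_apply, Finset.mul_sum, Finset.sum_mul]
          refine Finset.sum_congr rfl fun j _ => Finset.sum_congr rfl fun k _ => by ring
        rw [hq1, hq2]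
        have hk := key_ineq hC₀Ξ (B *ᵥ x) i
        have hBx : (B *ᵥ x) i = (B i) ⬝ᵥ x := rfl
        rw [hBx] at hk
        linarith
    have hsum := hS2.add hT
    have heq : (S + M - Bᵀ * D⁻¹ * B) + (Bᵀ * D⁻¹ * B - (D i i)⁻¹ • vecMulVec (B i) (B i))
        = S + M - (D i i)⁻¹ • vecMulVec (B i) (B i) := sub_add_sub_cancel _ _ _
    rw [heq] at hsum
    rw [hDii]
    exact hsum
  refine ⟨hsub, ?_⟩
  intro Sw hw Ss hs hminw _
  exact hminw Ss (hsub hs)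
end

section
/- Let d ≥ 1 be an integer and let θ₀ > 0, θ > 0, c > 0 be real numbers. Then the inequality c (2θ)^{-d/2} exp(-‖ω‖²/(4θ)) ≤ (2θ₀)^{-d/2} exp(-‖ω‖²/(4θ₀)) holds for every ω ∈ ℝ^d if and only if c ≤ 1 and c^{2/d} θ₀ ≤ θ ≤ θ₀. (This characterizes when the Fourier transform of the Gaussian kernel c·exp(-θ‖x‖²) is dominated pointwise by that of exp(-θ₀‖x‖²).) -/
open Real

lemma aux_real (θ₀ θ A A₀ c : ℝ) (hθ₀ : 0 < θ₀) (hθ : 0 < θ) (hc : 0 < c)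
    (hA : 0 < A) (hA₀ : 0 < A₀) :
    (∀ r : ℝ, 0 ≤ r → c * A * Real.exp (-r / (4 * θ)) ≤ A₀ * Real.exp (-r / (4 * θ₀))) ↔
      (c * A ≤ A₀ ∧ θ ≤ θ₀) := by
  constructor
  · intro h
    have h0 := h 0 le_rfl
    simp at h0
    refine ⟨h0, ?_⟩
    by_contra h'
    push_neg at h'
    set k : ℝ := 1 / (4 * θ₀) - 1 / (4 * θ) with hk
    have hkpos : 0 < k := by
      have : 1 / (4 * θ) < 1 / (4 * θ₀) := by
        apply one_div_lt_one_div_of_lt <;> nlinarith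
      simpa [hk] using sub_pos.mpr this
    set r : ℝ := max 0 ((1 - Real.log (c * A / A₀)) / k) with hr
    have hr0 : 0 ≤ r := le_max_left _ _
    have hkey : A₀ * Real.exp (-r * k) < c * A := by
      have h1 : (1 - Real.log (c * A / A₀)) / k ≤ r := le_max_right _ _
      have h2 : 1 - Real.log (c * A / A₀) ≤ r * k := by
        rw [div_le_iff₀ hkpos] at h1; linarith
      have h3 : -r * k < Real.log (c * A / A₀) := by nlinarith
      have h4 : Real.exp (-r * k) < c * A / A₀ := by
        calc Real.exp (-r * k) < Real.exp (Real.log (c * A / A₀)) := Real.exp_lt_exp.mpr h3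
        _ = c * A / A₀ := Real.exp_log (by positivity)
      calc A₀ * Real.exp (-r * k) < A₀ * (c * A / A₀) := by
            exact mul_lt_mul_of_pos_left h4 hA₀
        _ = c * A := by field_simp
    have hsplit : Real.exp (-r / (4 * θ₀)) = Real.exp (-r * k) * Real.exp (-r / (4 * θ)) := by
      rw [← Real.exp_add]
      congr 1
      rw [hk]
      ring
    have := h r hr0
    rw [hsplit] at this
    have hE : 0 < Real.exp (-r / (4 * θ)) := Real.exp_pos _
    nlinarith [mul_lt_mul_of_pos_right hkey hE]
  · rintro ⟨h1, h2⟩ r hr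
    have hE : Real.exp (-r / (4 * θ)) ≤ Real.exp (-r / (4 * θ₀)) := by
      apply Real.exp_le_exp.mpr
      rw [div_le_div_iff₀ (by positivity) (by positivity)]
      nlinarith
    calc c * A * Real.exp (-r / (4 * θ)) ≤ A₀ * Real.exp (-r / (4 * θ)) := by
          exact mul_le_mul_of_nonneg_right h1 (Real.exp_pos _).le
      _ ≤ A₀ * Real.exp (-r / (4 * θ₀)) := by
          exact mul_le_mul_of_nonneg_left hE hA₀.le

/-- For `d ≥ 1`, `θ₀, θ, c > 0`, the pointwise domination
`c (2θ)^{-d/2} exp(-‖ω‖²/(4θ)) ≤ (2θ₀)^{-d/2} exp(-‖ω‖²/(4θ₀))` for all `ω ∈ ℝ^d` holds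
if and only if `c ≤ 1` and `c^{2/d} θ₀ ≤ θ ≤ θ₀`.  (This characterizes when the Fourier
transform of the Gaussian kernel `c exp(-θ‖x‖²)` is dominated by that of `exp(-θ₀‖x‖²)`.) -/
theorem gaussian_fourier_domination_iff {d : ℕ} (hd : 1 ≤ d) (θ₀ θ c : ℝ)
    (hθ₀ : 0 < θ₀) (hθ : 0 < θ) (hc : 0 < c) :
    (∀ ω : EuclideanSpace ℝ (Fin d),
        c * (2 * θ) ^ (-(d : ℝ) / 2) * Real.exp (-‖ω‖ ^ 2 / (4 * θ)) ≤
          (2 * θ₀) ^ (-(d : ℝ) / 2) * Real.exp (-‖ω‖ ^ 2 / (4 * θ₀))) ↔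
      (c ≤ 1 ∧ c ^ (2 / (d : ℝ)) * θ₀ ≤ θ ∧ θ ≤ θ₀) := by
  have hd0 : (0 : ℝ) < d := by exact_mod_cast hd
  set A : ℝ := (2 * θ) ^ (-(d : ℝ) / 2) with hAdef
  set A₀ : ℝ := (2 * θ₀) ^ (-(d : ℝ) / 2) with hA₀def
  have hA : 0 < A := Real.rpow_pos_of_pos (by positivity) _
  have hA₀ : 0 < A₀ := Real.rpow_pos_of_pos (by positivity) _
  -- step 1: quantifier over ω ↔ quantifier over r ≥ 0
  have hstep1 : (∀ ω : EuclideanSpace ℝ (Fin d),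
        c * A * Real.exp (-‖ω‖ ^ 2 / (4 * θ)) ≤ A₀ * Real.exp (-‖ω‖ ^ 2 / (4 * θ₀))) ↔
      (∀ r : ℝ, 0 ≤ r → c * A * Real.exp (-r / (4 * θ)) ≤ A₀ * Real.exp (-r / (4 * θ₀))) := by
    constructor
    · intro h r hr
      have := h (EuclideanSpace.single ⟨0, hd⟩ (Real.sqrt r))
      rwa [EuclideanSpace.norm_single, Real.norm_eq_abs, sq_abs, Real.sq_sqrt hr] at this
    · intro h ω
      exact h (‖ω‖ ^ 2) (by positivity)
  rw [hstep1, aux_real θ₀ θ A A₀ c hθ₀ hθ hc hA hA₀]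
  -- step 2 : c * A ≤ A₀ ↔ c ^ (2/d) * θ₀ ≤ θ
  have hkey : c * A ≤ A₀ ↔ c ^ (2 / (d : ℝ)) * θ₀ ≤ θ := by
    have hrw : c * A ≤ A₀ ↔ c * (2 * θ₀) ^ ((d : ℝ) / 2) ≤ (2 * θ) ^ ((d : ℝ) / 2) := by
      rw [hAdef, hA₀def]
      rw [neg_div, Real.rpow_neg (by positivity), Real.rpow_neg (by positivity)]
      rw [inv_eq_one_div, inv_eq_one_div, mul_one_div,
        div_le_div_iff₀ (by positivity) (by positivity), one_mul]
    rw [hrw]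
    have hcrw : c = (c ^ (2 / (d : ℝ))) ^ ((d : ℝ) / 2) := by
      rw [← Real.rpow_mul hc.le]
      have : (2 / (d : ℝ)) * ((d : ℝ) / 2) = 1 := by
        field_simp
      rw [this, Real.rpow_one]
    conv_lhs => rw [hcrw]
    rw [← Real.mul_rpow (by positivity) (by positivity),
      Real.rpow_le_rpow_iff (by positivity) (by positivity) (by positivity)]
    constructor <;> intro h <;> nlinarith
  rw [hkey]
  constructor
  · rintro ⟨h1, h2⟩
    refine ⟨?_, h1, h2⟩
    have hle : c ^ (2 / (d : ℝ)) ≤ 1 := by nlinarith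
    by_contra h'
    push_neg at h'
    have : (1:ℝ) < c ^ (2 / (d : ℝ)) := Real.one_lt_rpow_iff_of_pos hc |>.mpr (Or.inl ⟨h', by positivity⟩) 
    linarith
  · rintro ⟨_, h2, h3⟩
    exact ⟨h2, h3⟩
end

section
/- Let d ≥ 1 be an integer, θ₀ > 0, 0 ≤ c < 1, and let θ > 0 satisfy c^{2/d} θ₀ ≤ θ ≤ θ₀. Then the function Φ(x) = exp(-θ₀‖x‖²) - c·exp(-θ‖x‖²) on ℝ^d is positive definite: for every m ≥ 1 and pairwise distinct x₁,…,x_m ∈ ℝ^d, the m×m matrix with (i,j)-th entry exp(-θ₀‖xᵢ - xⱼ‖²) - c·exp(-θ‖xᵢ - xⱼ‖²) is symmetric positive definite. -/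
open Real MeasureTheory Filter Complex
open scoped RealInnerProductSpace Topology

noncomputable section
variable {d m : ℕ}

def Strig (x : Fin m → EuclideanSpace ℝ (Fin d)) (v : Fin m → ℝ) (ξ : EuclideanSpace ℝ (Fin d)) : ℂ :=
  ∑ i, (v i : ℂ) * Complex.exp (Complex.I * (⟪x i, ξ⟫ : ℝ))

lemma strig_expand (x : Fin m → EuclideanSpace ℝ (Fin d)) (v : Fin m → ℝ) (b : ℝ)
    (ξ : EuclideanSpace ℝ (Fin d)) :
    (Complex.normSq (Strig x v ξ) : ℂ) * Complex.exp (-(b:ℂ) * ‖ξ‖^2) =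
      ∑ i, ∑ j, (v i * v j : ℂ) *
        Complex.exp (-(b:ℂ) * ‖ξ‖^2 + Complex.I * (⟪x i - x j, ξ⟫ : ℝ)) := by
  rw [← Complex.mul_conj]
  have hconj : (starRingEnd ℂ) (Strig x v ξ) =
      ∑ j, (v j : ℂ) * Complex.exp (-(Complex.I * (⟪x j, ξ⟫ : ℝ))) := by
    unfold Strig
    rw [map_sum]
    refine Finset.sum_congr rfl fun j _ => ?_
    rw [map_mul, ← Complex.exp_conj, map_mul, Complex.conj_I, Complex.conj_ofReal,
      Complex.conj_ofReal, neg_mul]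
  rw [hconj]
  unfold Strig
  rw [Finset.sum_mul_sum, Finset.sum_mul]
  refine Finset.sum_congr rfl fun i _ => ?_
  rw [Finset.sum_mul]
  refine Finset.sum_congr rfl fun j _ => ?_
  rw [inner_sub_left]
  push_cast
  rw [mul_mul_mul_comm, ← Complex.exp_add, mul_assoc, ← Complex.exp_add]
  ring_nf

lemma strig_integrable_cx (x : Fin m → EuclideanSpace ℝ (Fin d)) (v : Fin m → ℝ) {b : ℝ}
    (hb : 0 < b) :
    Integrable (fun ξ : EuclideanSpace ℝ (Fin d) =>
      (Complex.normSq (Strig x v ξ) : ℂ) * Complex.exp (-(b:ℂ) * ‖ξ‖^2)) := by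
  have hb' : 0 < ((b:ℂ)).re := by simpa using hb
  rw [show (fun ξ : EuclideanSpace ℝ (Fin d) =>
      (Complex.normSq (Strig x v ξ) : ℂ) * Complex.exp (-(b:ℂ) * ‖ξ‖^2)) = _ from
    funext (strig_expand x v b)]
  refine integrable_finset_sum _ fun i _ => integrable_finset_sum _ fun j _ => ?_
  exact (GaussianFourier.integrable_cexp_neg_mul_sq_norm_add hb' Complex.I (x i - x j)).const_mul _

lemma strig_integrable (x : Fin m → EuclideanSpace ℝ (Fin d)) (v : Fin m → ℝ) {b : ℝ}
    (hb : 0 < b) :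
    Integrable (fun ξ : EuclideanSpace ℝ (Fin d) =>
      Complex.normSq (Strig x v ξ) * rexp (-b * ‖ξ‖^2)) := by
  have h := (strig_integrable_cx x v hb).re
  have e : (fun ξ : EuclideanSpace ℝ (Fin d) =>
      Complex.normSq (Strig x v ξ) * rexp (-b * ‖ξ‖^2)) = fun ξ =>
      ((Complex.normSq (Strig x v ξ) : ℂ) * Complex.exp (-(b:ℂ) * ‖ξ‖^2)).re := by
    funext ξ
    rw [show (-(b:ℂ) * ‖ξ‖^2) = ((-b * ‖ξ‖^2 : ℝ) : ℂ) by push_cast; ring,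
      ← Complex.ofReal_exp, ← Complex.ofReal_mul, Complex.ofReal_re]
  rw [e]
  exact h

lemma strig_key (x : Fin m → EuclideanSpace ℝ (Fin d)) (v : Fin m → ℝ) {a : ℝ} (ha : 0 < a) :
    ∫ ξ : EuclideanSpace ℝ (Fin d),
        Complex.normSq (Strig x v ξ) * rexp (-(1/(4*a)) * ‖ξ‖^2) =
      (4*π*a) ^ ((d:ℝ)/2) * ∑ i, ∑ j, v i * v j * rexp (-a * ‖x i - x j‖^2) := by
  have hb : 0 < (1:ℝ)/(4*a) := by positivity
  have hb' : 0 < (((1/(4*a) : ℝ)):ℂ).re := by simpa using hb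
  rw [← Complex.ofReal_inj]
  have hli : (((∫ ξ : EuclideanSpace ℝ (Fin d),
        Complex.normSq (Strig x v ξ) * rexp (-(1/(4*a)) * ‖ξ‖^2) : ℝ)) : ℂ) =
      ∫ ξ : EuclideanSpace ℝ (Fin d),
        (Complex.normSq (Strig x v ξ) : ℂ) * Complex.exp (-((1/(4*a):ℝ):ℂ) * ‖ξ‖^2) := by
    have h0 : ∀ ξ : EuclideanSpace ℝ (Fin d),
        ((Complex.normSq (Strig x v ξ) * rexp (-(1/(4*a)) * ‖ξ‖^2) : ℝ) : ℂ) =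
        (Complex.normSq (Strig x v ξ) : ℂ) * Complex.exp (-((1/(4*a):ℝ):ℂ) * ‖ξ‖^2) := by
      intro ξ; push_cast; ring
    have h1 : ((∫ ξ : EuclideanSpace ℝ (Fin d),
        Complex.normSq (Strig x v ξ) * rexp (-(1/(4*a)) * ‖ξ‖^2) : ℝ) : ℂ) =
        ∫ ξ : EuclideanSpace ℝ (Fin d),
          ((Complex.normSq (Strig x v ξ) * rexp (-(1/(4*a)) * ‖ξ‖^2) : ℝ) : ℂ) :=
      (integral_ofReal (𝕜 := ℂ)).symm
    rw [h1]
    exact integral_congr_ae (Filter.Eventually.of_forall h0)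
  rw [hli]
  have hsingle : ∀ w : EuclideanSpace ℝ (Fin d),
      ∫ ξ : EuclideanSpace ℝ (Fin d),
        Complex.exp (-((1/(4*a):ℝ):ℂ) * ‖ξ‖^2 + Complex.I * (⟪w, ξ⟫ : ℝ)) =
      ((4*π*a : ℂ)) ^ ((d : ℂ) / 2) * Complex.exp (-(a : ℂ) * ‖w‖^2) := by
    intro w
    rw [GaussianFourier.integral_cexp_neg_mul_sq_norm_add hb' Complex.I w,
      finrank_euclideanSpace_fin]
    have hane : (a:ℂ) ≠ 0 := by exact_mod_cast ha.ne'
    have h1 : (π : ℂ) / ((1/(4*a):ℝ):ℂ) = 4*π*a := by push_cast; field_simp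
    rw [h1]
    congr 1
    rw [Complex.I_sq]
    push_cast
    field_simp
  calc ∫ ξ : EuclideanSpace ℝ (Fin d),
        (Complex.normSq (Strig x v ξ) : ℂ) * Complex.exp (-((1/(4*a):ℝ):ℂ) * ‖ξ‖^2)
      = ∫ ξ : EuclideanSpace ℝ (Fin d), ∑ i, ∑ j, (v i * v j : ℂ) *
          Complex.exp (-((1/(4*a):ℝ):ℂ) * ‖ξ‖^2 + Complex.I * (⟪x i - x j, ξ⟫ : ℝ)) := by
        congr 1 with ξ; exact strig_expand x v _ ξ
    _ = ∑ i, ∑ j, (v i * v j : ℂ) *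
          (((4*π*a : ℂ)) ^ ((d : ℂ) / 2) * Complex.exp (-(a : ℂ) * ‖x i - x j‖^2)) := by
        rw [integral_finset_sum _ fun i _ => integrable_finset_sum _ fun j _ =>
          (GaussianFourier.integrable_cexp_neg_mul_sq_norm_add hb' Complex.I
            (x i - x j)).const_mul _]
        refine Finset.sum_congr rfl fun i _ => ?_
        rw [integral_finset_sum _ fun j _ =>
          (GaussianFourier.integrable_cexp_neg_mul_sq_norm_add hb' Complex.I
            (x i - x j)).const_mul _]
        refine Finset.sum_congr rfl fun j _ => ?_
        rw [integral_const_mul, hsingle]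
    _ = (((4*π*a : ℝ) ^ ((d:ℝ)/2) : ℝ) : ℂ) *
          ∑ i, ∑ j, ((v i * v j : ℝ) : ℂ) * Complex.exp (-(a : ℂ) * ‖x i - x j‖^2) := by
        rw [Complex.ofReal_cpow (by positivity)]
        push_cast
        rw [Finset.mul_sum]
        refine Finset.sum_congr rfl fun i _ => ?_
        rw [Finset.mul_sum]
        refine Finset.sum_congr rfl fun j _ => ?_
        ring
    _ = _ := by
        push_cast
        try ring

set_option maxHeartbeats 2000000 in
/-- Let `d ≥ 1`, `θ₀ > 0`, `0 ≤ c < 1`, and `θ > 0` with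
`c^{2/d} θ₀ ≤ θ ≤ θ₀`.  Then `Φ(x) = exp(-θ₀‖x‖²) - c exp(-θ‖x‖²)` is positive definite on
`ℝ^d`: for every `m ≥ 1` and pairwise distinct `x₁, …, x_m ∈ ℝ^d`, the matrix with entries
`exp(-θ₀‖xᵢ - xⱼ‖²) - c exp(-θ‖xᵢ - xⱼ‖²)` is symmetric positive definite. -/
theorem gaussian_difference_positive_definite {d : ℕ} (hd : 1 ≤ d) (θ₀ θ c : ℝ)
    (hθ₀ : 0 < θ₀) (hθ : 0 < θ) (hc0 : 0 ≤ c) (hc1 : c < 1)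
    (hθl : c ^ (2 / (d : ℝ)) * θ₀ ≤ θ) (hθu : θ ≤ θ₀) :
    ∀ (m : ℕ), 1 ≤ m → ∀ x : Fin m → EuclideanSpace ℝ (Fin d), Function.Injective x →
      (Matrix.of fun i j =>
        Real.exp (-θ₀ * ‖x i - x j‖ ^ 2) - c * Real.exp (-θ * ‖x i - x j‖ ^ 2)).PosDef := by
  intro m hm x hinj
  haveI : Nonempty (Fin d) := ⟨⟨0, hd⟩⟩
  set p : ℝ := (d : ℝ) / 2 with hp
  have hp0 : 0 < p := by
    have : (0:ℝ) < d := by exact_mod_cast hd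
    positivity
  -- c ≤ (θ/θ₀)^p
  have hcle : c ≤ (θ / θ₀) ^ p := by
    have h1 : c ^ (2 / (d : ℝ)) ≤ θ / θ₀ := (le_div_iff₀ hθ₀).mpr hθl
    have h2 : ((c ^ (2 / (d:ℝ))) ^ p : ℝ) ≤ (θ / θ₀) ^ p :=
      Real.rpow_le_rpow (Real.rpow_nonneg hc0 _) h1 hp0.le
    have h3 : (c ^ (2 / (d:ℝ))) ^ p = c := by
      rw [← Real.rpow_mul hc0]
      have hdne : (d : ℝ) ≠ 0 := by positivity
      rw [show 2 / (d:ℝ) * p = 1 by rw [hp]; field_simp, Real.rpow_one]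
    rwa [h3] at h2
  set A : ℝ := (4*π*θ₀) ^ (-p) with hA
  set B : ℝ := (4*π*θ) ^ (-p) with hB
  have hApos : 0 < A := Real.rpow_pos_of_pos (by positivity) _
  have hBpos : 0 < B := Real.rpow_pos_of_pos (by positivity) _
  have hcB : c * B ≤ A := by
    have h4θ : (0:ℝ) < (4*π*θ) ^ p := Real.rpow_pos_of_pos (by positivity) _
    have h4θ₀ : (0:ℝ) < (4*π*θ₀) ^ p := Real.rpow_pos_of_pos (by positivity) _
    have key : c * (4*π*θ₀)^p ≤ (4*π*θ)^p := by
      rw [Real.mul_rpow (by positivity) hθ₀.le, Real.mul_rpow (by positivity) hθ.le]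
      have hθ₀p : (0:ℝ) < θ₀ ^ p := Real.rpow_pos_of_pos hθ₀ _
      have hcle' : c * θ₀^p ≤ θ^p := by
        rw [Real.div_rpow hθ.le hθ₀.le] at hcle
        calc c * θ₀^p ≤ (θ^p/θ₀^p) * θ₀^p := by nlinarith
          _ = θ^p := by field_simp
      nlinarith [Real.rpow_pos_of_pos (show (0:ℝ) < 4*π by positivity) p]
    rw [hA, hB, Real.rpow_neg (by positivity), Real.rpow_neg (by positivity),
      ← div_eq_mul_inv, ← one_div, div_le_div_iff₀ h4θ h4θ₀]
    linarith
  -- the weight function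
  set W : EuclideanSpace ℝ (Fin d) → ℝ := fun ξ =>
    A * rexp (-(1/(4*θ₀)) * ‖ξ‖^2) - c * B * rexp (-(1/(4*θ)) * ‖ξ‖^2) with hWdef
  have hg01 : ∀ ξ : EuclideanSpace ℝ (Fin d),
      rexp (-(1/(4*θ)) * ‖ξ‖^2) ≤ rexp (-(1/(4*θ₀)) * ‖ξ‖^2) := by
    intro ξ
    apply Real.exp_le_exp.mpr
    have h1 : 1/(4*θ₀) ≤ 1/(4*θ) := by
      apply one_div_le_one_div_of_le (by positivity); linarith
    nlinarith [sq_nonneg (‖ξ‖)]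
  have hW0 : ∀ ξ, 0 ≤ W ξ := by
    intro ξ
    have h2 : c * B * rexp (-(1/(4*θ)) * ‖ξ‖^2) ≤ A * rexp (-(1/(4*θ₀)) * ‖ξ‖^2) := by
      calc c * B * rexp (-(1/(4*θ)) * ‖ξ‖^2) ≤ A * rexp (-(1/(4*θ)) * ‖ξ‖^2) := by
            have := Real.exp_pos (-(1/(4*θ)) * ‖ξ‖^2); nlinarith
        _ ≤ A * rexp (-(1/(4*θ₀)) * ‖ξ‖^2) := by
            have := hg01 ξ; nlinarith
    simp only [hWdef]; linarith
  have hWpos : ∀ ξ : EuclideanSpace ℝ (Fin d), ξ ≠ 0 → 0 < W ξ := by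
    intro ξ hξ
    have hn : 0 < ‖ξ‖^2 := by
      have := norm_pos_iff.mpr hξ; positivity
    rcases eq_or_lt_of_le hθu with heq | hlt
    · -- θ = θ₀
      have hAB : B = A := by rw [hA, hB, heq]
      have he : 0 < rexp (-(1/(4*θ₀)) * ‖ξ‖^2) := Real.exp_pos _
      simp only [hWdef, heq, hAB]
      nlinarith [mul_pos hApos he, mul_pos (mul_pos hApos he) (show (0:ℝ) < 1 - c by linarith)]
    · -- θ < θ₀ : strict inequality of exponentials
      have h1 : 1/(4*θ₀) < 1/(4*θ) := by
        apply one_div_lt_one_div_of_lt (by positivity); linarith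
      have hstrict : rexp (-(1/(4*θ)) * ‖ξ‖^2) < rexp (-(1/(4*θ₀)) * ‖ξ‖^2) := by
        apply Real.exp_lt_exp.mpr; nlinarith
      have he : 0 < rexp (-(1/(4*θ)) * ‖ξ‖^2) := Real.exp_pos _
      simp only [hWdef]
      nlinarith
  rw [Matrix.posDef_iff_dotProduct_mulVec]
  constructor
  · -- Hermitian
    ext i j
    simp only [Matrix.conjTranspose_apply, Matrix.of_apply, star_trivial,
      norm_sub_rev (x j) (x i)]
  · intro v hv
    set Q : ℝ → ℝ := fun a => ∑ i, ∑ j, v i * v j * rexp (-a * ‖x i - x j‖^2) with hQdef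
    have hq : ∀ a : ℝ, 0 < a → Q a = (4*π*a)^(-p) *
        ∫ ξ : EuclideanSpace ℝ (Fin d), Complex.normSq (Strig x v ξ) *
          rexp (-(1/(4*a)) * ‖ξ‖^2) := by
      intro a ha
      rw [hQdef]
      simp only
      rw [strig_key x v ha, ← hp, ← mul_assoc, Real.rpow_neg (by positivity),
        inv_mul_cancel₀ (ne_of_gt (Real.rpow_pos_of_pos (by positivity) _)), one_mul]
    have hexpand : dotProduct (star v) ((Matrix.of fun i j =>
        Real.exp (-θ₀ * ‖x i - x j‖ ^ 2) - c * Real.exp (-θ * ‖x i - x j‖ ^ 2)).mulVec v)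
        = Q θ₀ - c * Q θ := by
      simp only [dotProduct, Matrix.mulVec, Matrix.of_apply, Pi.star_apply,
        star_trivial, hQdef, Finset.mul_sum, ← Finset.sum_sub_distrib]
      exact Finset.sum_congr rfl fun i _ => Finset.sum_congr rfl fun j _ => by ring
    have hint0 := strig_integrable x v (show (0:ℝ) < 1/(4*θ₀) by positivity)
    have hint1 := strig_integrable x v (show (0:ℝ) < 1/(4*θ) by positivity)
    have hvMv : dotProduct (star v) ((Matrix.of fun i j =>
        Real.exp (-θ₀ * ‖x i - x j‖ ^ 2) - c * Real.exp (-θ * ‖x i - x j‖ ^ 2)).mulVec v)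
        = ∫ ξ : EuclideanSpace ℝ (Fin d), Complex.normSq (Strig x v ξ) * W ξ := by
      rw [hexpand, hq θ₀ hθ₀, hq θ hθ, ← hA, ← hB]
      rw [← integral_const_mul A, ← integral_const_mul B, ← integral_const_mul c, ← integral_sub
        (hint0.const_mul A) ((hint1.const_mul B).const_mul c)]
      congr 1 with ξ
      simp only [hWdef]
      ring
    -- continuity facts
    have hcontS : Continuous (Strig x v) := by
      unfold Strig
      refine continuous_finset_sum _ fun i _ => continuous_const.mul ?_
      exact Complex.continuous_exp.comp (continuous_const.mul
        (Complex.continuous_ofReal.comp (Continuous.inner continuous_const continuous_id)))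
    have hWcont : Continuous W := by
      simp only [hWdef]
      fun_prop
    have hFcont : Continuous fun ξ : EuclideanSpace ℝ (Fin d) =>
        Complex.normSq (Strig x v ξ) * W ξ :=
      (Complex.continuous_normSq.comp hcontS).mul hWcont
    have hFnn : ∀ ξ, 0 ≤ Complex.normSq (Strig x v ξ) * W ξ :=
      fun ξ => mul_nonneg (Complex.normSq_nonneg _) (hW0 ξ)
    have hFint : Integrable (fun ξ : EuclideanSpace ℝ (Fin d) =>
        Complex.normSq (Strig x v ξ) * W ξ) := by
      have h := (hint0.const_mul A).sub ((hint1.const_mul B).const_mul c)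
      have he : (fun ξ : EuclideanSpace ℝ (Fin d) => Complex.normSq (Strig x v ξ) * W ξ) =
          fun ξ => A * (Complex.normSq (Strig x v ξ) * rexp (-(1/(4*θ₀)) * ‖ξ‖^2)) -
            c * (B * (Complex.normSq (Strig x v ξ) * rexp (-(1/(4*θ)) * ‖ξ‖^2))) := by
        funext ξ
        simp only [hWdef]
        ring
      rw [he]
      exact h
    rw [hvMv]
    by_contra hle
    push_neg at hle
    have hI0 : ∫ ξ : EuclideanSpace ℝ (Fin d), Complex.normSq (Strig x v ξ) * W ξ = 0 :=
      le_antisymm hle (integral_nonneg hFnn)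
    have hae : (fun ξ : EuclideanSpace ℝ (Fin d) => Complex.normSq (Strig x v ξ) * W ξ)
        =ᵐ[(volume : Measure (EuclideanSpace ℝ (Fin d)))] 0 :=
      (integral_eq_zero_iff_of_nonneg hFnn hFint).mp hI0
    have hzero : ∀ ξ, Complex.normSq (Strig x v ξ) * W ξ = 0 := by
      have h := (hFcont.ae_eq_iff_eq volume continuous_const).mp hae
      exact fun ξ => congrFun h ξ
    have hSzero : ∀ ξ : EuclideanSpace ℝ (Fin d), Strig x v ξ = 0 := by
      have hdense : Dense ({(0 : EuclideanSpace ℝ (Fin d))}ᶜ) := dense_compl_singleton _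
      have heqon : Set.EqOn (Strig x v) (fun _ => 0) ({(0 : EuclideanSpace ℝ (Fin d))}ᶜ) := by
        intro ξ hξ
        have hw := hWpos ξ hξ
        have h0 := hzero ξ
        have hns : Complex.normSq (Strig x v ξ) = 0 := by
          rcases mul_eq_zero.mp h0 with h | h
          · exact h
          · exact absurd h hw.ne'
        exact Complex.normSq_eq_zero.mp hns
      have h := Continuous.ext_on hdense hcontS continuous_const heqon
      exact fun ξ => congrFun h ξ
    have hQA : ∀ a : ℝ, 0 < a → Q a = 0 := by
      intro a ha
      rw [hq a ha]
      have h : (fun ξ : EuclideanSpace ℝ (Fin d) =>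
          Complex.normSq (Strig x v ξ) * rexp (-(1/(4*a)) * ‖ξ‖^2)) = fun _ => 0 := by
        funext ξ
        rw [hSzero ξ]
        simp
      rw [h, integral_zero, mul_zero]
    have hlim : Tendsto Q atTop (𝓝 (∑ i, v i ^ 2)) := by
      have hsum : (∑ i, v i ^ 2) =
          ∑ i : Fin m, ∑ j : Fin m, (if j = i then v i ^ 2 else 0) := by
        simp
      rw [hsum, hQdef]
      refine tendsto_finset_sum _ fun i _ => tendsto_finset_sum _ fun j _ => ?_
      by_cases hij : j = i
      · subst hij
        have h : (fun a : ℝ => v j * v j * rexp (-a * ‖x j - x j‖^2)) = fun _ => v j ^ 2 := by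
          funext a
          simp [sub_self, sq]
        simp only
        rw [h]
        simpa using tendsto_const_nhds
      · have hxne : x i - x j ≠ 0 := sub_ne_zero.mpr fun h => hij (hinj h).symm
        have hD : 0 < ‖x i - x j‖^2 := by
          have := norm_pos_iff.mpr hxne
          positivity
        have h2 : Tendsto (fun a : ℝ => -a * ‖x i - x j‖^2) atTop atBot := by
          simp only [neg_mul]
          exact Filter.tendsto_neg_atTop_atBot.comp (tendsto_id.atTop_mul_const hD)
        have h1 : Tendsto (fun a : ℝ => rexp (-a * ‖x i - x j‖^2)) atTop (𝓝 0) :=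
          Real.tendsto_exp_atBot.comp h2
        have h3 := h1.const_mul (v i * v j)
        rw [mul_zero] at h3
        simpa [hij] using h3
    have heq0 : Tendsto Q atTop (𝓝 0) := by
      have h : Q =ᶠ[atTop] fun _ => 0 := by
        filter_upwards [eventually_gt_atTop 0] with a ha using hQA a ha
      exact Tendsto.congr' h.symm tendsto_const_nhds
    have hsum0 : ∑ i, v i ^ 2 = 0 := tendsto_nhds_unique hlim heq0
    refine hv (funext fun i => ?_)
    have h := (Finset.sum_eq_zero_iff_of_nonneg
      (fun i _ => sq_nonneg (v i))).mp hsum0 i (Finset.mem_univ i)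
    exact pow_eq_zero_iff two_ne_zero |>.mp h
end
end

section
/- Monotonicity of the Gram-type matrix G under subsets (finite-set form of Theorem 3, part 1): let C be a real positive definite γ×γ matrix, B a real n×γ matrix, and let I be a nonempty subset of {1,…,γ}. Denote by C_{I,I} the principal submatrix of C on the rows and columns indexed by I (which is positive definite) and by B_{·,I} the n×|I| matrix of the columns of B indexed by I. Then the matrix B C⁻¹ Bᵀ - B_{·,I} (C_{I,I})⁻¹ (B_{·,I})ᵀ is positive semidefinite. (In the paper's notation, with C = K_{S,S} - H_{S,S} and B = K_{X,S}, this says G(S) - G(S') ⪰ 0 for any nonempty finite subset S' of a finite set S of sensitive inputs.) -/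
open Matrix

/-- A principal submatrix (along an injective index map) of a positive definite real
matrix is positive definite. -/
lemma posDef_submatrix_injective {m l : Type*} [Fintype m] [Fintype l] [DecidableEq m]
    [DecidableEq l] {C : Matrix m m ℝ} (hC : C.PosDef) (e : l → m)
    (he : Function.Injective e) : (C.submatrix e e).PosDef := by
  classical
  set E : Matrix m l ℝ := (1 : Matrix m m ℝ).submatrix id e with hE_def
  have hEC : Eᵀ * C * E = C.submatrix e e := by
    ext a b
    simp [hE_def, Matrix.mul_apply, Matrix.one_apply, he.eq_iff]
  rw [posDef_iff_dotProduct_mulVec]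
  constructor
  · show (C.submatrix e e)ᴴ = _
    rw [conjTranspose_submatrix, hC.1.eq]
  · intro x hx
    set y : m → ℝ := E *ᵥ x with hy_def
    have hyx : ∀ a, y (e a) = x a := by
      intro a
      simp [hy_def, hE_def, Matrix.mulVec, Matrix.one_apply, he.eq_iff, dotProduct]
    have hy : y ≠ 0 := by
      obtain ⟨a, ha⟩ := Function.ne_iff.mp hx
      exact Function.ne_iff.mpr ⟨e a, by simpa [hyx a] using ha⟩
    have key := hC.dotProduct_mulVec_pos hy
    have : star y ⬝ᵥ C *ᵥ y = star x ⬝ᵥ (C.submatrix e e) *ᵥ x := by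
      rw [← hEC, hy_def]
      simp only [star_trivial]
      rw [← mulVec_mulVec, dotProduct_comm, Matrix.dotProduct_mulVec,
        ← Matrix.mulVec_transpose, dotProduct_comm, ← mulVec_mulVec]
    rwa [this] at key

/-- finite-set form of Theorem 3, part 1.  Let `C` be a real positive
definite `γ × γ` matrix, `B` a real `n × γ` matrix, and `I` a nonempty subset of the index set.
Then `B C⁻¹ Bᵀ - B_{·,I} (C_{I,I})⁻¹ (B_{·,I})ᵀ` is positive semidefinite, where `C_{I,I}` is
the principal submatrix of `C` on `I` and `B_{·,I}` consists of the columns of `B` indexed by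
`I`. -/
theorem gram_matrix_monotone_subset {n γ : ℕ}
    (C : Matrix (Fin γ) (Fin γ) ℝ) (B : Matrix (Fin n) (Fin γ) ℝ)
    (hC : C.PosDef) (I : Finset (Fin γ)) (hI : I.Nonempty) :
    (B * C⁻¹ * Bᵀ -
      B.submatrix id (Subtype.val : {i // i ∈ I} → Fin γ) *
        (C.submatrix (Subtype.val : {i // i ∈ I} → Fin γ) Subtype.val)⁻¹ *
        (B.submatrix id (Subtype.val : {i // i ∈ I} → Fin γ))ᵀ).PosSemidef := by
  classical
  set e : {i // i ∈ I} → Fin γ := Subtype.val with he_def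
  have he : Function.Injective e := Subtype.val_injective
  set E : Matrix (Fin γ) {i // i ∈ I} ℝ := (1 : Matrix (Fin γ) (Fin γ) ℝ).submatrix id e
    with hE_def
  have hEC : Eᵀ * C * E = C.submatrix e e := by
    ext a b
    simp [hE_def, Matrix.mul_apply, Matrix.one_apply, he.eq_iff]
  have hBE : B * E = B.submatrix id e := by
    ext i b
    simp [hE_def, Matrix.mul_apply, Matrix.one_apply]
  set D : Matrix {i // i ∈ I} {i // i ∈ I} ℝ := C.submatrix e e with hD_def
  have hD : D.PosDef := posDef_submatrix_injective hC e he
  have hCC : C * C⁻¹ = 1 := mul_nonsing_inv _ hC.det_pos.ne'.isUnit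
  have hCC' : C⁻¹ * C = 1 := nonsing_inv_mul _ hC.det_pos.ne'.isUnit
  have hDD : D * D⁻¹ = 1 := mul_nonsing_inv _ hD.det_pos.ne'.isUnit
  have hCsymm : Cᵀ = C := by
    rw [← conjTranspose_eq_transpose_of_trivial, hC.1.eq]
  have hDinv_symm : (D⁻¹)ᵀ = D⁻¹ := by
    rw [transpose_nonsing_inv]
    rw [← conjTranspose_eq_transpose_of_trivial, hD.1.eq]
  set Q : Matrix (Fin γ) (Fin γ) ℝ := 1 - E * D⁻¹ * Eᵀ * C with hQ_def
  have hQT : Qᵀ = 1 - C * E * D⁻¹ * Eᵀ := by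
    rw [hQ_def, transpose_sub, transpose_one, transpose_mul, transpose_mul, transpose_mul,
      hCsymm, hDinv_symm, transpose_transpose]
    simp only [Matrix.mul_assoc]
  have claim : Q * C⁻¹ * Qᵀ = C⁻¹ - E * D⁻¹ * Eᵀ := by
    rw [hQT, hQ_def]
    have h1 : E * D⁻¹ * Eᵀ * C * C⁻¹ = E * D⁻¹ * Eᵀ := by
      rw [Matrix.mul_assoc (E * D⁻¹ * Eᵀ), hCC, Matrix.mul_one]
    have h2 : C⁻¹ * (C * E * D⁻¹ * Eᵀ) = E * D⁻¹ * Eᵀ := by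
      rw [show C * E * D⁻¹ * Eᵀ = C * (E * D⁻¹ * Eᵀ) by
        simp only [Matrix.mul_assoc],
        ← Matrix.mul_assoc, hCC', Matrix.one_mul]
    have h3 : E * D⁻¹ * Eᵀ * (C * E * D⁻¹ * Eᵀ) = E * D⁻¹ * Eᵀ := by
      rw [show C * E * D⁻¹ * Eᵀ = C * (E * D⁻¹ * Eᵀ) by
        simp only [Matrix.mul_assoc],
        show E * D⁻¹ * Eᵀ * (C * (E * D⁻¹ * Eᵀ)) = E * D⁻¹ * (Eᵀ * C * E) * D⁻¹ * Eᵀ by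
        simp only [Matrix.mul_assoc], hEC,
        show E * D⁻¹ * D * D⁻¹ * Eᵀ = E * (D⁻¹ * D * D⁻¹) * Eᵀ by
          simp only [Matrix.mul_assoc]]
      rw [nonsing_inv_mul _ hD.det_pos.ne'.isUnit, Matrix.one_mul]
    simp only [Matrix.sub_mul, Matrix.mul_sub, Matrix.one_mul, Matrix.mul_one]
    rw [h1, h2, h3]
    abel
  have key : B * C⁻¹ * Bᵀ - (B * E) * D⁻¹ * (B * E)ᵀ = (B * Q) * C⁻¹ * (B * Q)ᵀ := by
    rw [transpose_mul, transpose_mul, show B * Q * C⁻¹ * (Qᵀ * Bᵀ) = B * (Q * C⁻¹ * Qᵀ) * Bᵀ by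
      simp only [Matrix.mul_assoc], claim]
    simp only [Matrix.mul_sub, Matrix.sub_mul, Matrix.mul_assoc]
  have key' : B * C⁻¹ * Bᵀ - B.submatrix id e * D⁻¹ * (B.submatrix id e)ᵀ =
      (B * Q) * C⁻¹ * (B * Q)ᵀ := by rw [← key, hBE]
  suffices h : (B * Q * C⁻¹ * (B * Q)ᵀ).PosSemidef from (congrArg Matrix.PosSemidef key').mpr h
  have := (hC.inv.posSemidef).mul_mul_conjTranspose_same (B * Q)
  rwa [conjTranspose_eq_transpose_of_trivial] at this
end
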